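/- If (X, ξ) is a T₁ convergence space (every singleton is closed) and A is a nonempty connected subset, then the enclosure e(A) = { x : A ∪ {x} is connected } equals adh_ξ A. In particular, cl_ξ A encloses A if and only if adh_ξ A = cl_ξ A. -/

import Mathlib

open Filter Set

/-- A convergence structure on `X`: a relation between points and (proper) filters,
such that every principal ultrafilter converges to its point, and finer filters
have more limit points. -/
structure Convergence (X : Type*) where
  /-- The set of limit points of a filter. -/
  conv : Filter X → Set X
  pure_conv : ∀ x : X, x ∈ conv (pure x)
  mono : ∀ ⦃F G : Filter X⦄, F ≤ G → F.NeBot → conv G ⊆ conv F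

namespace Convergence

variable {X Y : Type*}

/-- A set is open if every (proper) filter converging to a point of it contains it. -/
def IsOpen (ξ : Convergence X) (U : Set X) : Prop :=
  ∀ F : Filter X, F.NeBot → (ξ.conv F ∩ U).Nonempty → U ∈ F

/-- A set is closed if it contains all limits of (proper) filters containing it. -/
def IsClosed (ξ : Convergence X) (C : Set X) : Prop :=
  ∀ F : Filter X, F.NeBot → C ∈ F → ξ.conv F ⊆ C

/-- A convergence space is connected if its only clopen subsets are trivial. -/
def ConnSpace (ξ : Convergence X) : Prop :=
  ∀ U : Set X, ξ.IsOpen U → ξ.IsClosed U → U = ∅ ∨ U = Set.univ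

/-- The induced (subspace) convergence on a subset. -/
def subConv (ξ : Convergence X) (A : Set X) : Convergence A where
  conv F := {a | (a : X) ∈ ξ.conv (F.map Subtype.val)}
  pure_conv a := by simpa using ξ.pure_conv (a : X)
  mono F G h hF a ha := by
    haveI := hF
    exact ξ.mono (Filter.map_mono h) Filter.map_neBot ha

/-- A subset of a convergence space is connected if it is connected as a subspace. -/
def ConnSet (ξ : Convergence X) (A : Set X) : Prop :=
  (ξ.subConv A).ConnSpace

/-- The (principal) adherence of a set: all limits of proper filters containing it. -/
def adh (ξ : Convergence X) (A : Set X) : Set X :=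
  {x | ∃ G : Filter X, G.NeBot ∧ A ∈ G ∧ x ∈ ξ.conv G}

/-- The order on convergences: `σ ≤ τ` (σ is coarser than τ) iff every limit for τ
is a limit for σ. -/
def le (σ τ : Convergence X) : Prop :=
  ∀ F : Filter X, F.NeBot → τ.conv F ⊆ σ.conv F

/-- The reciprocal modification: same convergence except on principal ultrafilters,
where `t ∈ lim_{rξ} {x}↑` iff `t ∈ lim_ξ {x}↑` or `x ∈ lim_ξ {t}↑`. -/
def rMod (ξ : Convergence X) : Convergence X where
  conv F := {t | t ∈ ξ.conv F ∨ ∃ x : X, F = pure x ∧ x ∈ ξ.conv (pure t)}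
  pure_conv x := Or.inl (ξ.pure_conv x)
  mono := by
    rintro F G h hF t (ht | ⟨x, rfl, hx⟩)
    · exact Or.inl (ξ.mono h hF ht)
    · have hFx : F = pure x := by
        refine le_antisymm h fun s hs => ?_
        have h1 : {x} ∈ F := le_pure_iff.mp h
        obtain ⟨y, hy⟩ := hF.nonempty_of_mem (inter_mem hs h1)
        have : y = x := hy.2
        subst this
        exact mem_pure.mpr hy.1
      exact Or.inr ⟨x, hFx, hx⟩

/-- The topological modification: the topology whose open sets are the ξ-open sets. -/
def topMod (ξ : Convergence X) : TopologicalSpace X where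
  IsOpen := ξ.IsOpen
  isOpen_univ := fun _ _ _ => univ_mem
  isOpen_inter := fun U V hU hV F hF ⟨x, hx⟩ =>
    inter_mem (hU F hF ⟨x, hx.1, hx.2.1⟩) (hV F hF ⟨x, hx.1, hx.2.2⟩)
  isOpen_sUnion := fun S hS F hF ⟨x, hx⟩ => by
    obtain ⟨U, hUS, hxU⟩ := hx.2
    exact mem_of_superset (hS U hUS F hF ⟨x, hx.1, hxU⟩) (subset_sUnion_of_mem hUS)

/-- The pretopological modification `S₀ξ`. -/
def preMod (ξ : Convergence X) : Convergence X where
  conv F := ⋂ A ∈ {H : Set X | ∀ S ∈ F, (H ∩ S).Nonempty}, ξ.adh A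
  pure_conv x := by
    simp only [Set.mem_iInter]
    intro A hA
    obtain ⟨y, hy⟩ := hA {x} (by simp)
    have : x ∈ A := by
      have : y = x := hy.2
      subst this; exact hy.1
    exact ⟨pure x, by infer_instance, mem_pure.mpr this, ξ.pure_conv x⟩
  mono := by
    intro F G h _ t ht
    simp only [Set.mem_iInter] at ht ⊢
    intro A hA
    exact ht A fun S hS => hA S (h hS)

/-- The convergence associated with a topology. -/
def ofTop (t : TopologicalSpace X) : Convergence X where
  conv F := {x | F ≤ @nhds X t x}
  pure_conv x := @pure_le_nhds X t x
  mono _ _ h _ _ hx := le_trans h hx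

/-- `A` is a `T`-subspace when the topological modification of the subspace convergence
is the subspace topology of the topological modification. -/
def TSubspace (ξ : Convergence X) (A : Set X) : Prop :=
  (ξ.subConv A).topMod = TopologicalSpace.induced (Subtype.val : A → X) ξ.topMod

/-- The dual Alexandroff adherence `adh_{ξ*}`. -/
def adhStar (ξ : Convergence X) (A : Set X) : Set X :=
  {t | (ξ.conv (pure t) ∩ A).Nonempty}

/-- Iterated adherence (for an arbitrary adherence-like operator), by transfinite
recursion: `iterAdh f A 0 = A` and `iterAdh f A α = f (⋃_{β<α} iterAdh f A β)`. -/
noncomputable def iterAdh (f : Set X → Set X) (A : Set X) : Ordinal → Set X :=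
  Ordinal.lt_wf.fix fun α ih =>
    if α = 0 then A else f (⋃ β : {β : Ordinal // β < α}, ih β.1 β.2)

/-- Continuity of maps between convergence spaces. -/
def Continuous (ξ : Convergence X) (τ : Convergence Y) (f : X → Y) : Prop :=
  ∀ F : Filter X, F.NeBot → ∀ x ∈ ξ.conv F, f x ∈ τ.conv (F.map f)

end Convergence

/-! If `x ∉ adh_ξ A`, then `A` is closed in `A ∪ {x}` and, by T₁, so is `{x}`; hence `{x}` is a
nontrivial clopen subset and `A ∪ {x}` is disconnected. Conversely, a clopen subset of a set
`B` with `A ⊆ B ⊆ adh_ξ A` contains `A` or misses it, because `A` is connected, and, being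
closed in `B`, it then contains or misses every filter limit of `A` lying in `B`, i.e. all of
`B`. Since `adh_ξ A ⊆ cl_ξ A` always, the second statement follows from the first. -/

namespace Convergence

variable {X Y : Type*} {ξ : Convergence X}

theorem IsOpen.isClosed_compl {U : Set X} (hU : ξ.IsOpen U) : ξ.IsClosed Uᶜ := by
  intro F hF hUc y hy hyU
  exact hF.ne (empty_mem_iff_bot.mp (by simpa using inter_mem (hU F hF ⟨y, hy, hyU⟩) hUc))

theorem IsClosed.isOpen_compl {C : Set X} (hC : ξ.IsClosed C) : ξ.IsOpen Cᶜ := by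
  rintro F hF ⟨y, hy, hyC⟩
  by_contra hCF
  have hFC : (F ⊓ 𝓟 C).NeBot := by
    rwa [neBot_iff, ne_eq, inf_principal_eq_bot]
  exact hyC (hC _ hFC (mem_inf_of_right (mem_principal_self C)) (ξ.mono inf_le_left hFC hy))

theorem subset_adh (A : Set X) : A ⊆ ξ.adh A :=
  fun x hx => ⟨pure x, inferInstance, hx, ξ.pure_conv x⟩

theorem adh_subset_closure (A : Set X) : ξ.adh A ⊆ @closure X ξ.topMod A := by
  let _ := ξ.topMod
  rintro x ⟨G, hG, hAG, hxG⟩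
  rw [mem_closure_iff]
  intro U hU hxU
  exact hG.nonempty_of_mem (inter_mem (hU G hG ⟨x, hxG, hxU⟩) hAG)

theorem Continuous.isOpen_preimage {τ : Convergence Y} {f : X → Y} (hf : ξ.Continuous τ f)
    {U : Set Y} (hU : τ.IsOpen U) : ξ.IsOpen (f ⁻¹' U) := by
  rintro F hF ⟨x, hx, hxU⟩
  exact mem_map.mp (hU _ (hF.map f) ⟨f x, hf F hF x hx, hxU⟩)

theorem Continuous.isClosed_preimage {τ : Convergence Y} {f : X → Y} (hf : ξ.Continuous τ f)
    {C : Set Y} (hC : τ.IsClosed C) : ξ.IsClosed (f ⁻¹' C) :=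
  fun F hF hCF x hx => hC _ (hF.map f) (mem_map.mpr hCF) (hf F hF x hx)

theorem continuous_subtype_val (S : Set X) : (ξ.subConv S).Continuous ξ Subtype.val :=
  fun _ _ _ hx => hx

theorem continuous_inclusion {A S : Set X} (hAS : A ⊆ S) :
    (ξ.subConv A).Continuous (ξ.subConv S) (inclusion hAS) := by
  intro F _ a ha
  show (a : X) ∈ ξ.conv ((F.map (inclusion hAS)).map Subtype.val)
  rwa [map_map]

theorem IsClosed.preimage_adh_subset {A S : Set X} (hAS : A ⊆ S) {C : Set S}
    (hC : (ξ.subConv S).IsClosed C) (hAC : Subtype.val ⁻¹' A ⊆ C) :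
    Subtype.val ⁻¹' ξ.adh A ⊆ C := by
  rintro x ⟨G, hG, hAG, hxG⟩
  have hF : (comap ((↑) : S → X) G).NeBot := by
    rw [comap_neBot_iff]
    intro t ht
    obtain ⟨y, hyA, hyt⟩ := hG.nonempty_of_mem (inter_mem hAG ht)
    exact ⟨⟨y, hAS hyA⟩, hyt⟩
  exact hC _ hF (mem_of_superset (preimage_mem_comap hAG) hAC)
    (ξ.mono map_comap_le (hF.map _) hxG)

theorem isClosed_preimage_of_adh_subset {A S : Set X} (h : S ∩ ξ.adh A ⊆ A) :
    (ξ.subConv S).IsClosed (Subtype.val ⁻¹' A) := by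
  intro F hF hAF y hy
  exact h ⟨y.2, _, hF.map _, mem_map.mpr hAF, hy⟩

theorem ConnSet.subset_adh {A B : Set X} (hA : ξ.ConnSet A) (hAB : A ⊆ B)
    (hBA : B ⊆ ξ.adh A) : ξ.ConnSet B := by
  intro U hUo hUc
  have hB : Subtype.val ⁻¹' ξ.adh A = (univ : Set B) := eq_univ_of_forall fun b => hBA b.2
  rcases hA _ ((continuous_inclusion hAB).isOpen_preimage hUo)
      ((continuous_inclusion hAB).isClosed_preimage hUc) with hAU | hAU
  · left
    have hAUc : Subtype.val ⁻¹' A ⊆ Uᶜ := fun b hb =>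
      eq_empty_iff_forall_notMem.mp hAU ⟨b, hb⟩
    simpa [hB] using hUo.isClosed_compl.preimage_adh_subset hAB hAUc
  · right
    have hAU' : Subtype.val ⁻¹' A ⊆ U := fun b hb => eq_univ_iff_forall.mp hAU ⟨b, hb⟩
    simpa [hB] using hUc.preimage_adh_subset hAB hAU'

theorem not_connSet_union_singleton {A : Set X} {x : X} (hx : ξ.IsClosed {x})
    (hA : A.Nonempty) (hxA : x ∉ ξ.adh A) : ¬ ξ.ConnSet (A ∪ {x}) := by
  intro hconn
  have hxA' : x ∉ A := fun h => hxA (subset_adh A h)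
  have hcompl : (Subtype.val ⁻¹' A : Set ↥(A ∪ {x}))ᶜ = Subtype.val ⁻¹' {x} := by
    ext ⟨y, hy | rfl⟩
    · simp [hy, show y ≠ x by rintro rfl; exact hxA' hy]
    · simp [hxA']
  have hclosed : (ξ.subConv (A ∪ {x})).IsClosed (Subtype.val ⁻¹' {x}) :=
    (continuous_subtype_val _).isClosed_preimage hx
  have hopen : (ξ.subConv (A ∪ {x})).IsOpen (Subtype.val ⁻¹' {x}) := by
    refine hcompl ▸ (isClosed_preimage_of_adh_subset ?_).isOpen_compl
    rintro y ⟨hy | rfl, hyA⟩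
    exacts [hy, absurd hyA hxA]
  obtain ⟨a, ha⟩ := hA
  rcases hconn _ hopen hclosed with h | h
  · exact h.subset (show (⟨x, Or.inr rfl⟩ : ↥(A ∪ {x})) ∈ Subtype.val ⁻¹' {x} from rfl)
  · have hax : a = x := h.symm.subset (mem_univ (⟨a, Or.inl ha⟩ : ↥(A ∪ {x})))
    exact hxA' (hax ▸ ha)

theorem setOf_connSet_union_singleton_eq_adh (hT1 : ∀ x : X, ξ.IsClosed {x}) {A : Set X}
    (hA : A.Nonempty) (hconn : ξ.ConnSet A) :
    {x : X | ξ.ConnSet (A ∪ {x})} = ξ.adh A := by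
  ext x
  refine ⟨fun hx => ?_, fun hx => ?_⟩
  · by_contra hxA
    exact not_connSet_union_singleton (hT1 x) hA hxA hx
  · exact hconn.subset_adh subset_union_left
      (union_subset (subset_adh A) (singleton_subset_iff.mpr hx))

end Convergence

open Convergence in
/-- In a T₁ convergence space, the enclosure of a nonempty connected set `A` is
`adh_ξ A`; in particular `cl_ξ A` encloses `A` iff `adh_ξ A = cl_ξ A`. -/
theorem enclosure_eq_adh_of_T1 {X : Type*} (ξ : Convergence X)
    (hT1 : ∀ x : X, ξ.IsClosed {x}) {A : Set X} (hA : A.Nonempty)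
    (hconn : ξ.ConnSet A) :
    {x : X | ξ.ConnSet (A ∪ {x})} = ξ.adh A ∧
      ((∀ B : Set X, A ⊆ B → B ⊆ @closure X ξ.topMod A → ξ.ConnSet B) ↔
        ξ.adh A = @closure X ξ.topMod A) := by
  have henc := setOf_connSet_union_singleton_eq_adh hT1 hA hconn
  refine ⟨henc, fun hencl => (adh_subset_closure A).antisymm fun x hx => ?_,
    fun hadh B hAB hBcl => hconn.subset_adh hAB (hadh ▸ hBcl)⟩
  rw [← henc]
  exact hencl _ subset_union_left
    (union_subset (@subset_closure X ξ.topMod A) (singleton_subset_iff.mpr hx))
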